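/- arXiv:2004.12142 — 5 statements merged into one kernel-verified Lean document; each statement's English description precedes it below -/
import Mathlib

section
/- Let (f_n)_{n≥0} and (g_n)_{n≥0} be sequences of real numbers. If f_n = Σ_{k=0}^{n} g_k·S_{1,λ}(n,k) for every n ≥ 0, then g_n = Σ_{k=0}^{n} f_k·S_{2,λ}(n,k) for every n ≥ 0. -/
open Finset PowerSeries

/-- degenerate falling factorial `(x)_{n,λ}`; `dff 1 x n` is the ordinary falling factorial. -/
noncomputable def dff (lam x : ℝ) (n : ℕ) : ℝ := ∏ i ∈ Finset.range n, (x - (i : ℝ) * lam)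

/-- `(1)_{n,1/λ} = ∏_{i<n} (1 - i/λ)`. -/
noncomputable def oneFall (lam : ℝ) (n : ℕ) : ℝ := ∏ i ∈ Finset.range n, (1 - (i : ℝ) / lam)

/-- degenerate exponential `e_λ^x(t)` as a formal power series. -/
noncomputable def degExp (lam x : ℝ) : PowerSeries ℝ :=
  PowerSeries.mk fun n => dff lam x n / n.factorial

/-- `(1+t)^y = Σ_{n≥0} (y)_n t^n/n!`. -/
noncomputable def onePlus (y : ℝ) : PowerSeries ℝ :=
  PowerSeries.mk fun n => dff 1 y n / n.factorial

/-- `(1-t)^y = Σ_{n≥0} (y)_n (-1)^n t^n/n!`. -/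
noncomputable def oneMinus (y : ℝ) : PowerSeries ℝ :=
  PowerSeries.mk fun n => dff 1 y n * (-1) ^ n / n.factorial

/-- `log_λ(1+t) = Σ_{n≥1} λ^{n-1} (1)_{n,1/λ} t^n/n!`. -/
noncomputable def degLog (lam : ℝ) : PowerSeries ℝ :=
  PowerSeries.mk fun n => if n = 0 then 0 else lam ^ (n - 1) * oneFall lam n / n.factorial

/-- `log_λ(1-t) = Σ_{n≥1} λ^{n-1} (1)_{n,1/λ} (-1)^n t^n/n!`. -/
noncomputable def degLogNeg (lam : ℝ) : PowerSeries ℝ :=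
  PowerSeries.mk fun n =>
    if n = 0 then 0 else lam ^ (n - 1) * oneFall lam n * (-1) ^ n / n.factorial

/-- composition `f(g(t))` of formal power series (the usual composition when the
constant term of `g` is zero). -/
noncomputable def pcomp (f g : PowerSeries ℝ) : PowerSeries ℝ :=
  PowerSeries.mk fun n =>
    ∑ k ∈ Finset.range (n + 1), (PowerSeries.coeff k f) * (PowerSeries.coeff n (g ^ k))

/-!
Substituting the expansion of `(x)_l` into that of `(x)_{n,λ}` gives
`Σ_l S_{2,λ}(n,l) S_{1,λ}(l,j) = δ_{nj}`, because the `(x)_{k,λ}` are linearly independent: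
at `x = mλ` the factorial `(x)_{k,λ}` vanishes for `k > m` but not for `k = m`. So the lower
triangular matrix `S_{2,λ}` is a left inverse of `S_{1,λ}`, and it inverts the transform `g ↦ f`.
-/

lemma dff_natCast_mul_eq_zero (lam : ℝ) {m k : ℕ} (h : m < k) : dff lam (m * lam) k = 0 :=
  Finset.prod_eq_zero (Finset.mem_range.mpr h) (by ring)

lemma dff_natCast_mul_ne_zero {lam : ℝ} (hlam : lam ≠ 0) (m : ℕ) : dff lam (m * lam) m ≠ 0 := by
  refine Finset.prod_ne_zero_iff.mpr fun i hi => ?_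
  have hi : (i : ℝ) < m := by exact_mod_cast Finset.mem_range.mp hi
  rw [← sub_mul]
  exact mul_ne_zero (sub_ne_zero.mpr hi.ne') hlam

lemma eq_zero_of_sum_mul_dff_eq_zero {lam : ℝ} (hlam : lam ≠ 0) {N : ℕ} {c : ℕ → ℝ}
    (h : ∀ x : ℝ, ∑ k ∈ range (N + 1), c k * dff lam x k = 0) : ∀ m ≤ N, c m = 0 := by
  intro m
  induction m using Nat.strong_induction_on with
  | _ m ih =>
    intro hm
    have hsingle : ∑ k ∈ range (N + 1), c k * dff lam (m * lam) k = c m * dff lam (m * lam) m := by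
      refine Finset.sum_eq_single_of_mem m (Finset.mem_range.mpr (Nat.lt_succ_of_le hm))
        fun k _ hkm => ?_
      rcases lt_or_gt_of_ne hkm with hk | hk
      · rw [ih k hk (hk.le.trans hm), zero_mul]
      · rw [dff_natCast_mul_eq_zero lam hk, mul_zero]
    have h0 := h (m * lam)
    rw [hsingle] at h0
    exact (mul_eq_zero.mp h0).resolve_right (dff_natCast_mul_ne_zero hlam m)

lemma coeff_eq_of_sum_mul_dff_eq {lam : ℝ} (hlam : lam ≠ 0) {N : ℕ} {c d : ℕ → ℝ}
    (h : ∀ x : ℝ, ∑ k ∈ range (N + 1), c k * dff lam x k = ∑ k ∈ range (N + 1), d k * dff lam x k) :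
    ∀ m ≤ N, c m = d m := by
  have hcd := eq_zero_of_sum_mul_dff_eq_zero hlam (N := N) (c := c - d) fun x => by
    simp only [Pi.sub_apply, sub_mul, Finset.sum_sub_distrib, h, sub_self]
  exact fun m hm => sub_eq_zero.mp (hcd m hm)

lemma sum_mul_sum_triangular {R : Type*} [CommSemiring R] (a b : ℕ → ℕ → R) (v w : ℕ → R)
    {n : ℕ} (hv : ∀ l ≤ n, v l = ∑ j ∈ range (l + 1), a l j * w j) :
    ∑ l ∈ range (n + 1), b n l * v l
      = ∑ j ∈ range (n + 1), (∑ l ∈ Ico j (n + 1), b n l * a l j) * w j := by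
  calc ∑ l ∈ range (n + 1), b n l * v l
      = ∑ l ∈ range (n + 1), ∑ j ∈ range (l + 1), b n l * a l j * w j := by
        refine Finset.sum_congr rfl fun l hl => ?_
        rw [hv l (Nat.lt_succ_iff.mp (Finset.mem_range.mp hl)), Finset.mul_sum]
        simp only [mul_assoc]
    _ = ∑ j ∈ range (n + 1), (∑ l ∈ Ico j (n + 1), b n l * a l j) * w j := by
        simp only [range_eq_Ico, ← Finset.sum_Ico_Ico_comm, Finset.sum_mul]

lemma eq_sum_mul_of_sum_mul_eq_ite {R : Type*} [CommSemiring R] (a b : ℕ → ℕ → R)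
    (f g : ℕ → R) {n : ℕ}
    (hba : ∀ j ≤ n, ∑ l ∈ Ico j (n + 1), b n l * a l j = if j = n then 1 else 0)
    (hf : ∀ k, f k = ∑ j ∈ range (k + 1), g j * a k j) :
    g n = ∑ k ∈ range (n + 1), f k * b n k := by
  have hf' : ∀ k ≤ n, f k = ∑ j ∈ range (k + 1), a k j * g j := fun k _ => by
    simp only [hf k, mul_comm]
  simp_rw [mul_comm (f _), sum_mul_sum_triangular a b f g hf']
  rw [Finset.sum_congr rfl fun j hj => by
    rw [hba j (Nat.lt_succ_iff.mp (Finset.mem_range.mp hj))]]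
  simp

lemma sum_S2_mul_S1_eq_ite {lam : ℝ} (hlam : lam ≠ 0) {S1 S2 : ℕ → ℕ → ℝ}
    (hS1 : ∀ (x : ℝ) (n : ℕ), dff 1 x n = ∑ l ∈ range (n + 1), S1 n l * dff lam x l)
    (hS2 : ∀ (x : ℝ) (n : ℕ), dff lam x n = ∑ l ∈ range (n + 1), S2 n l * dff 1 x l)
    (n : ℕ) : ∀ j ≤ n, ∑ l ∈ Ico j (n + 1), S2 n l * S1 l j = if j = n then 1 else 0 := by
  refine coeff_eq_of_sum_mul_dff_eq hlam fun x => ?_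
  rw [← sum_mul_sum_triangular S1 S2 (dff 1 x) (dff lam x) fun l _ => hS1 x l, ← hS2]
  simp

/-- Inversion theorem: if `f_n = Σ_{k=0}^n g_k S_{1,λ}(n,k)` for all `n`, then
`g_n = Σ_{k=0}^n f_k S_{2,λ}(n,k)` for all `n`. -/
theorem stmt_2 (lam : ℝ) (hlam : lam ≠ 0) (S1 S2 : ℕ → ℕ → ℝ)
    (hS1 : ∀ (x : ℝ) (n : ℕ), dff 1 x n = ∑ l ∈ Finset.range (n + 1), S1 n l * dff lam x l)
    (hS2 : ∀ (x : ℝ) (n : ℕ), dff lam x n = ∑ l ∈ Finset.range (n + 1), S2 n l * dff 1 x l)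
    (f g : ℕ → ℝ)
    (hf : ∀ n : ℕ, f n = ∑ k ∈ Finset.range (n + 1), g k * S1 n k) :
    ∀ n : ℕ, g n = ∑ k ∈ Finset.range (n + 1), f k * S2 n k := by
  intro n
  exact eq_sum_mul_of_sum_mul_eq_ite S1 S2 f g (sum_S2_mul_S1_eq_ite hlam hS1 hS2 n) hf
end

section
/- Let (f_n)_{n≥0} and (g_n)_{n≥0} be sequences of real numbers. If g_n = Σ_{k=0}^{n} f_k·S_{2,λ}(n,k) for every n ≥ 0, then f_n = Σ_{k=0}^{n} g_k·S_{1,λ}(n,k) for every n ≥ 0. -/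
open Finset PowerSeries

lemma aux_dff_nat_eq_zero (m j : ℕ) (h : m < j) : dff 1 (m:ℝ) j = 0 := by
  unfold dff
  apply Finset.prod_eq_zero (Finset.mem_range.mpr h)
  simp

lemma aux_dff_nat_ne_zero (m : ℕ) : dff 1 (m:ℝ) m ≠ 0 := by
  unfold dff
  rw [Finset.prod_ne_zero_iff]
  intro i hi
  have hi' : (i:ℝ) < m := by exact_mod_cast Finset.mem_range.mp hi
  intro h
  simp only [mul_one] at h
  linarith

lemma aux_indep (N : ℕ) (c : ℕ → ℝ)
    (h : ∀ x : ℝ, ∑ j ∈ Finset.range (N+1), c j * dff 1 x j = 0) :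
    ∀ m, m ≤ N → c m = 0 := by
  intro m
  induction m using Nat.strong_induction_on with
  | _ m ih =>
    intro hm
    have h0 := h (m : ℝ)
    have key : ∑ j ∈ Finset.range (N+1), c j * dff 1 (m:ℝ) j = c m * dff 1 (m:ℝ) m := by
      apply Finset.sum_eq_single
      · intro j hj hne
        rcases lt_or_gt_of_ne hne with hlt | hgt
        · rw [ih j hlt (le_trans hlt.le hm)]; ring
        · rw [aux_dff_nat_eq_zero m j hgt]; ring
      · intro hm'
        exact absurd (Finset.mem_range.mpr (Nat.lt_succ_of_le hm)) hm'
    rw [key] at h0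
    exact (mul_eq_zero.mp h0).resolve_right (aux_dff_nat_ne_zero m)

lemma aux_swap_sum (n : ℕ) (F : ℕ → ℕ → ℝ) :
    ∑ l ∈ Finset.range (n+1), ∑ j ∈ Finset.range (l+1), F l j
      = ∑ j ∈ Finset.range (n+1), ∑ l ∈ Finset.Icc j n, F l j := by
  apply Finset.sum_comm'
  intro l j
  simp only [Finset.mem_range, Finset.mem_Icc]
  omega

/-- Inversion theorem: if `g_n = Σ_{k=0}^n f_k S_{2,λ}(n,k)` for all `n`, then
`f_n = Σ_{k=0}^n g_k S_{1,λ}(n,k)` for all `n`. -/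
theorem stmt_3 (lam : ℝ) (hlam : lam ≠ 0) (S1 S2 : ℕ → ℕ → ℝ)
    (hS1 : ∀ (x : ℝ) (n : ℕ), dff 1 x n = ∑ l ∈ Finset.range (n + 1), S1 n l * dff lam x l)
    (hS2 : ∀ (x : ℝ) (n : ℕ), dff lam x n = ∑ l ∈ Finset.range (n + 1), S2 n l * dff 1 x l)
    (f g : ℕ → ℝ)
    (hg : ∀ n : ℕ, g n = ∑ k ∈ Finset.range (n + 1), f k * S2 n k) :
    ∀ n : ℕ, f n = ∑ k ∈ Finset.range (n + 1), g k * S1 n k := by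
  set T : ℕ → ℕ → ℝ := fun n j => ∑ l ∈ Finset.Icc j n, S1 n l * S2 l j with hT
  have orth : ∀ n j, j ≤ n → T n j = if j = n then 1 else 0 := by
    intro n
    have hx : ∀ x : ℝ,
        ∑ j ∈ Finset.range (n+1), (T n j - if j = n then 1 else 0) * dff 1 x j = 0 := by
      intro x
      have e1 : dff 1 x n = ∑ j ∈ Finset.range (n+1), T n j * dff 1 x j := by
        rw [hS1 x n]
        calc ∑ l ∈ Finset.range (n+1), S1 n l * dff lam x l
            = ∑ l ∈ Finset.range (n+1), ∑ j ∈ Finset.range (l+1),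
                S1 n l * (S2 l j * dff 1 x j) := by
              refine Finset.sum_congr rfl fun l _ => ?_
              rw [hS2 x l, Finset.mul_sum]
          _ = ∑ j ∈ Finset.range (n+1), ∑ l ∈ Finset.Icc j n,
                S1 n l * (S2 l j * dff 1 x j) := aux_swap_sum n _
          _ = ∑ j ∈ Finset.range (n+1), T n j * dff 1 x j := by
              refine Finset.sum_congr rfl fun j _ => ?_
              rw [hT]
              simp only [Finset.sum_mul]
              exact Finset.sum_congr rfl fun l _ => by ring
      have e2 : ∑ j ∈ Finset.range (n+1), (if j = n then (1:ℝ) else 0) * dff 1 x j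
          = dff 1 x n := by
        rw [Finset.sum_eq_single n]
        · simp
        · intro j _ hne; simp [hne]
        · simp
      simp only [sub_mul, Finset.sum_sub_distrib]
      rw [← e1, e2, sub_self]
    intro j hj
    have h0 := aux_indep n _ hx j hj
    exact sub_eq_zero.mp h0
  intro n
  have : ∑ k ∈ Finset.range (n+1), g k * S1 n k = f n := by
    calc ∑ k ∈ Finset.range (n+1), g k * S1 n k
        = ∑ k ∈ Finset.range (n+1), ∑ i ∈ Finset.range (k+1),
            f i * S2 k i * S1 n k := by
          refine Finset.sum_congr rfl fun k _ => ?_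
          rw [hg k, Finset.sum_mul]
      _ = ∑ i ∈ Finset.range (n+1), ∑ k ∈ Finset.Icc i n,
            f i * S2 k i * S1 n k := aux_swap_sum n _
      _ = ∑ i ∈ Finset.range (n+1), f i * T n i := by
          refine Finset.sum_congr rfl fun i _ => ?_
          rw [hT, Finset.mul_sum]
          exact Finset.sum_congr rfl fun l _ => by ring
      _ = f n := by
          rw [Finset.sum_eq_single n]
          · rw [orth n n le_rfl]; simp
          · intro i hi hne
            rw [orth n i (Nat.lt_succ_iff.mp (Finset.mem_range.mp hi))]
            simp [hne]
          · simp
  exact this.symm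
end

section
/- For every integer n ≥ 0, every integer r ≥ 1 and every real number x, C_n^{(r)}(x) = Σ_{k=0}^{n} E_{k,λ}^{(r)}(x)·S_{1,λ}(n,k). -/
open Finset PowerSeries

set_option linter.unusedSectionVars false

set_option maxHeartbeats 1000000

lemma dff_zero (lam x : ℝ) : dff lam x 0 = 1 := by simp [dff]

lemma dff_succ (lam x : ℝ) (n : ℕ) : dff lam x (n+1) = dff lam x n * (x - n * lam) := by
  simp [dff, Finset.prod_range_succ]

lemma dff_one_succ (y : ℝ) (n : ℕ) : dff 1 (y+1) (n+1) = (y+1) * dff 1 y n := by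
  unfold dff
  rw [Finset.prod_range_succ']
  rw [mul_comm]
  congr 1
  · simp
  · exact Finset.prod_congr rfl fun i _ => by push_cast; ring

lemma sum_ite_le {M : Type*} [AddCommMonoid M] (h : ℕ → M) {a n : ℕ} (han : a ≤ n) :
    ∑ i ∈ Finset.range (n+1), (if i ≤ a then h i else 0) = ∑ i ∈ Finset.range (a+1), h i := by
  rw [← Finset.sum_subset (Finset.range_subset_range.2 (by omega) : Finset.range (a+1) ⊆ Finset.range (n+1))
    (fun i _ hi => if_neg (by simp at hi; omega))]
  exact Finset.sum_congr rfl fun i hi => if_pos (by simp at hi; omega)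

lemma tri_sum' (n : ℕ) (H : ℕ → ℕ → ℝ) :
    ∑ k ∈ Finset.range (n+1), ∑ p ∈ Finset.range (k+1), H p (k - p)
    = ∑ p ∈ Finset.range (n+1), ∑ q ∈ Finset.range (n+1-p), H p q := by
  induction n with
  | zero => simp
  | succ n ih =>
    rw [Finset.sum_range_succ, ih,
      Finset.sum_range_succ (fun p => ∑ q ∈ Finset.range (n+1+1-p), H p q),
      Finset.sum_range_succ (fun p => H p (n+1-p))]
    have h1 : n + 1 + 1 - (n+1) = 1 := by omega
    rw [h1]
    simp only [Finset.sum_range_one, Nat.sub_self]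
    rw [← add_assoc, ← Finset.sum_add_distrib]
    congr 1
    refine Finset.sum_congr rfl fun p hp => ?_
    simp only [Finset.mem_range] at hp
    have h2 : n + 1 + 1 - p = (n + 1 - p) + 1 := by omega
    rw [h2, Finset.sum_range_succ]


lemma dff_eq_smeval (x : ℝ) (n : ℕ) : dff 1 x n = Polynomial.smeval (descPochhammer ℤ n) x := by
  induction n with
  | zero => simp [dff, descPochhammer]
  | succ n ih =>
    rw [dff_succ, descPochhammer_succ_right, Polynomial.smeval_mul, ih]
    simp [Polynomial.smeval_sub, Polynomial.smeval_X, Polynomial.smeval_natCast]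

lemma dff_scale (lam : ℝ) (hlam : lam ≠ 0) (x : ℝ) (n : ℕ) :
    dff lam x n = lam ^ n * dff 1 (x / lam) n := by
  unfold dff
  have hconst : lam ^ n = ∏ _i ∈ Finset.range n, lam := by
    rw [Finset.prod_const, Finset.card_range]
  rw [hconst, ← Finset.prod_mul_distrib]
  refine Finset.prod_congr rfl fun i _ => ?_
  field_simp

lemma dff_add (lam : ℝ) (hlam : lam ≠ 0) (x y : ℝ) (n : ℕ) :
    dff lam (x+y) n = ∑ a ∈ Finset.range (n+1), (n.choose a : ℝ) * dff lam x a * dff lam y (n-a) := by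
  have base : ∀ u v : ℝ, dff 1 (u+v) n
      = ∑ a ∈ Finset.range (n+1), (n.choose a : ℝ) * dff 1 u a * dff 1 v (n-a) := by
    intro u v
    rw [dff_eq_smeval, Ring.descPochhammer_smeval_add n (Commute.all u v),
      Finset.Nat.sum_antidiagonal_eq_sum_range_succ_mk]
    exact Finset.sum_congr rfl fun a ha => by rw [dff_eq_smeval, dff_eq_smeval]; push_cast; ring
  rw [dff_scale lam hlam, add_div, base, Finset.mul_sum]
  refine Finset.sum_congr rfl fun a ha => ?_
  simp only [Finset.mem_range] at ha
  rw [dff_scale lam hlam x, dff_scale lam hlam y]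
  have h2 : lam ^ n = lam ^ a * lam ^ (n - a) := by rw [← pow_add]; congr 1; omega
  rw [h2]; ring


lemma prod_sub_nat (m : ℕ) : ∏ i ∈ Finset.range m, ((m:ℝ) - i) = m.factorial := by
  have h1 : ∏ i ∈ Finset.range m, ((m:ℝ) - i) = ((∏ i ∈ Finset.range m, (m - i) : ℕ) : ℝ) := by
    rw [Nat.cast_prod]
    exact Finset.prod_congr rfl fun i hi => by
      simp only [Finset.mem_range] at hi
      have : (↑(m - i) : ℝ) = m - i := by push_cast [Nat.cast_sub hi.le]; ring
      rw [this]
  rw [h1]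
  congr 1
  have h2 : ∏ i ∈ Finset.range m, (m - i) = ∏ i ∈ Finset.range m, (i + 1) := by
    rw [← Finset.prod_range_reflect]
    exact Finset.prod_congr rfl fun j hj => by simp only [Finset.mem_range] at hj; omega
  rw [h2, Finset.prod_range_add_one_eq_factorial]

lemma dff_nat_self (lam : ℝ) (m : ℕ) : dff lam ((m:ℝ) * lam) m = lam ^ m * m.factorial := by
  unfold dff
  have : ∀ i ∈ Finset.range m, (m:ℝ) * lam - i * lam = lam * ((m:ℝ) - i) := fun i _ => by ring
  rw [Finset.prod_congr rfl this, Finset.prod_mul_distrib, Finset.prod_const, Finset.card_range,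
    prod_sub_nat]

lemma dff_nat_lt (lam : ℝ) {m l : ℕ} (h : m < l) : dff lam ((m:ℝ) * lam) l = 0 :=
  Finset.prod_eq_zero (Finset.mem_range.2 h) (by ring)

lemma dff_indep (lam : ℝ) (hlam : lam ≠ 0) (n : ℕ) (a : ℕ → ℝ)
    (h : ∀ x : ℝ, ∑ l ∈ Finset.range (n+1), a l * dff lam x l = 0) :
    ∀ m, m ≤ n → a m = 0 := by
  intro m
  induction m using Nat.strong_induction_on with
  | _ m ih =>
    intro hm
    have hx := h ((m:ℝ) * lam)
    rw [Finset.sum_eq_single m (fun l hl hne => ?_) (fun hmem => ?_)] at hx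
    · rw [dff_nat_self] at hx
      have hne : (lam:ℝ)^m * (m.factorial : ℝ) ≠ 0 :=
        mul_ne_zero (pow_ne_zero _ hlam) (Nat.cast_ne_zero.2 m.factorial_ne_zero)
      exact (mul_eq_zero.mp hx).resolve_right hne
    · rcases lt_or_gt_of_ne hne with h1 | h1
      · rw [ih l h1 (by omega), zero_mul]
      · rw [dff_nat_lt lam h1, mul_zero]
    · exact absurd (Finset.mem_range.2 (by omega)) hmem

lemma dff_basis_eq (lam : ℝ) (hlam : lam ≠ 0) (n : ℕ) (a b : ℕ → ℝ)
    (h : ∀ x : ℝ, ∑ l ∈ Finset.range (n+1), a l * dff lam x l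
       = ∑ l ∈ Finset.range (n+1), b l * dff lam x l) :
    ∀ m, m ≤ n → a m = b m := by
  have h2 := dff_indep lam hlam n (fun l => a l - b l) (fun x => by
    simp only [sub_mul, Finset.sum_sub_distrib, h x, sub_self])
  intro m hm
  have h3 := h2 m hm
  linarith


lemma shift_sum (i n : ℕ) (hi : i ≤ n) (h : ℕ → ℝ) :
    ∑ l ∈ Finset.range (n+1), (if i ≤ l then h (l - i) else 0)
    = ∑ j ∈ Finset.range (n+1), (if i + j ≤ n then h j else 0) := by
  have h1 : ∑ l ∈ Finset.range (n+1), (if i ≤ l then h (l - i) else 0)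
      = ∑ l ∈ Finset.Ico i (n+1), h (l - i) := by
    rw [← Finset.sum_filter]
    congr 1
    ext l
    simp [Nat.lt_succ_iff]
    omega
  rw [h1, Finset.sum_Ico_eq_sum_range]
  have h2 : ∀ j ∈ Finset.range (n+1), (if i + j ≤ n then h j else 0)
      = (if j ≤ n - i then h j else 0) := by
    intro j _
    congr 1
    simp only [eq_iff_iff]
    omega
  rw [Finset.sum_congr rfl h2, sum_ite_le _ (by omega : n - i ≤ n)]
  have h3 : n + 1 - i = n - i + 1 := by omega
  rw [h3]
  exact Finset.sum_congr rfl fun j _ => by congr 1; omega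

lemma S1_conv (lam : ℝ) (hlam : lam ≠ 0) (S1 : ℕ → ℕ → ℝ)
    (hS1 : ∀ (x : ℝ) (n : ℕ), dff 1 x n = ∑ l ∈ Finset.range (n + 1), S1 n l * dff lam x l)
    (n i j : ℕ) (hij : i + j ≤ n) :
    S1 n (i+j) * (((i+j).choose i : ℕ) : ℝ)
    = ∑ a ∈ Finset.range (n+1),
        (if i ≤ a ∧ j ≤ n - a then (n.choose a : ℝ) * S1 a i * S1 (n-a) j else 0) := by
  set F : ℕ → ℝ → ℝ := fun k y => ∑ a ∈ Finset.range (n+1),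
    if k ≤ a then (n.choose a : ℝ) * S1 a k * dff 1 y (n-a) else 0 with hFdef
  set G : ℕ → ℝ → ℝ := fun k y => ∑ l ∈ Finset.range (n+1),
    if k ≤ l then S1 n l * ((l.choose k : ℕ) : ℝ) * dff lam y (l-k) else 0 with hGdef
  have hF : ∀ y x, (∑ k ∈ Finset.range (n+1), F k y * dff lam x k) = dff 1 (x+y) n := by
    intro y x
    have h1 : ∀ k ∈ Finset.range (n+1), F k y * dff lam x k
        = ∑ a ∈ Finset.range (n+1),
            (if k ≤ a then (n.choose a:ℝ) * S1 a k * dff 1 y (n-a) * dff lam x k else 0) := by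
      intro k _
      rw [hFdef]
      simp only
      rw [Finset.sum_mul]
      exact Finset.sum_congr rfl fun a _ => by rw [ite_mul, zero_mul]
    rw [Finset.sum_congr rfl h1, Finset.sum_comm]
    have h2 : ∀ a ∈ Finset.range (n+1),
        (∑ k ∈ Finset.range (n+1),
          if k ≤ a then (n.choose a:ℝ) * S1 a k * dff 1 y (n-a) * dff lam x k else 0)
        = (n.choose a : ℝ) * dff 1 x a * dff 1 y (n-a) := by
      intro a ha
      simp only [Finset.mem_range] at ha
      rw [sum_ite_le _ (by omega : a ≤ n)]
      have h3 : ∑ k ∈ Finset.range (a+1), (n.choose a:ℝ) * S1 a k * dff 1 y (n-a) * dff lam x k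
          = ((n.choose a:ℝ) * dff 1 y (n-a)) * ∑ k ∈ Finset.range (a+1), S1 a k * dff lam x k := by
        rw [Finset.mul_sum]
        exact Finset.sum_congr rfl fun k _ => by ring
      rw [h3, ← hS1 x a]
      ring
    rw [Finset.sum_congr rfl h2, ← dff_add 1 one_ne_zero]
  have hG : ∀ y x, (∑ k ∈ Finset.range (n+1), G k y * dff lam x k) = dff 1 (x+y) n := by
    intro y x
    have h1 : ∀ k ∈ Finset.range (n+1), G k y * dff lam x k
        = ∑ l ∈ Finset.range (n+1),
            (if k ≤ l then S1 n l * ((l.choose k : ℕ):ℝ) * dff lam y (l-k) * dff lam x k else 0) := by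
      intro k _
      rw [hGdef]
      simp only
      rw [Finset.sum_mul]
      exact Finset.sum_congr rfl fun l _ => by rw [ite_mul, zero_mul]
    rw [Finset.sum_congr rfl h1, Finset.sum_comm]
    have h2 : ∀ l ∈ Finset.range (n+1),
        (∑ k ∈ Finset.range (n+1),
          if k ≤ l then S1 n l * ((l.choose k : ℕ):ℝ) * dff lam y (l-k) * dff lam x k else 0)
        = S1 n l * dff lam (x+y) l := by
      intro l hl
      simp only [Finset.mem_range] at hl
      rw [sum_ite_le _ (by omega : l ≤ n), dff_add lam hlam, Finset.mul_sum]
      exact Finset.sum_congr rfl fun k _ => by ring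
    rw [Finset.sum_congr rfl h2, ← hS1 (x+y) n]
  have hFG : ∀ y k, k ≤ n → F k y = G k y := fun y k hk =>
    dff_basis_eq lam hlam n (fun k => F k y) (fun k => G k y)
      (fun x => (hF y x).trans (hG y x).symm) k hk
  have hi : i ≤ n := by omega
  set P : ℕ → ℝ := fun jj => ∑ a ∈ Finset.range (n+1),
    (if i ≤ a ∧ jj ≤ n - a then (n.choose a : ℝ) * S1 a i * S1 (n-a) jj else 0) with hPdef
  set Q : ℕ → ℝ := fun jj =>
    (if i + jj ≤ n then S1 n (i+jj) * (((i+jj).choose i : ℕ):ℝ) else 0) with hQdef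
  have hFy : ∀ y, F i y = ∑ jj ∈ Finset.range (n+1), P jj * dff lam y jj := by
    intro y
    have expand : ∀ a ∈ Finset.range (n+1),
        (if i ≤ a then (n.choose a:ℝ) * S1 a i * dff 1 y (n-a) else 0)
        = ∑ jj ∈ Finset.range (n+1),
            (if i ≤ a ∧ jj ≤ n - a
             then (n.choose a:ℝ) * S1 a i * S1 (n-a) jj * dff lam y jj else 0) := by
      intro a ha
      simp only [Finset.mem_range] at ha
      by_cases hia : i ≤ a
      · simp only [hia, true_and, if_true]
        rw [sum_ite_le _ (by omega : n - a ≤ n), hS1 y (n-a), Finset.mul_sum]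
        exact Finset.sum_congr rfl fun jj _ => by ring
      · simp [hia]
    rw [hFdef]
    simp only
    rw [Finset.sum_congr rfl expand, Finset.sum_comm]
    refine Finset.sum_congr rfl fun jj _ => ?_
    rw [hPdef]
    simp only
    rw [Finset.sum_mul]
    exact Finset.sum_congr rfl fun a _ => by rw [ite_mul, zero_mul]
  have hGy : ∀ y, G i y = ∑ jj ∈ Finset.range (n+1), Q jj * dff lam y jj := by
    intro y
    rw [hGdef]
    simp only
    have h1 : ∀ l ∈ Finset.range (n+1),
        (if i ≤ l then S1 n l * ((l.choose i : ℕ):ℝ) * dff lam y (l-i) else 0)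
        = (if i ≤ l then
            S1 n (i + (l-i)) * (((i + (l-i)).choose i : ℕ):ℝ) * dff lam y (l-i) else 0) := by
      intro l _
      by_cases hil : i ≤ l
      · simp only [hil, if_true]
        congr 2 <;> rw [Nat.add_sub_cancel' hil]
      · simp [hil]
    rw [Finset.sum_congr rfl h1,
      shift_sum i n hi (fun t => S1 n (i+t) * (((i+t).choose i : ℕ):ℝ) * dff lam y t)]
    refine Finset.sum_congr rfl fun jj _ => ?_
    rw [hQdef]
    simp only
    rw [ite_mul, zero_mul]
  have hPQ : ∀ m, m ≤ n → P m = Q m := by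
    refine dff_basis_eq lam hlam n P Q fun y => ?_
    rw [← hFy y, ← hGy y, hFG y i hi]
  have hfin := hPQ j (by omega)
  rw [hPdef, hQdef] at hfin
  simp only [hij, if_true] at hfin
  rw [← hfin]


noncomputable def Tr (S1 : ℕ → ℕ → ℝ) (f : PowerSeries ℝ) : PowerSeries ℝ :=
  PowerSeries.mk fun n =>
    (∑ k ∈ Finset.range (n+1), S1 n k * k.factorial * PowerSeries.coeff k f) / n.factorial

section TLemmas
variable (lam : ℝ) (hlam : lam ≠ 0) (S1 : ℕ → ℕ → ℝ)
  (hS1 : ∀ (x : ℝ) (n : ℕ), dff 1 x n = ∑ l ∈ Finset.range (n + 1), S1 n l * dff lam x l)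

include hlam hS1

lemma S1_zero (n : ℕ) : S1 n 0 = if n = 0 then 1 else 0 := by
  have hdz : ∀ (mu : ℝ) (l : ℕ), dff mu 0 l = if l = 0 then 1 else 0 := by
    intro mu l
    cases l with
    | zero => simp [dff_zero]
    | succ l =>
      simp only [Nat.succ_ne_zero, if_false]
      exact Finset.prod_eq_zero (Finset.mem_range.2 (Nat.succ_pos l)) (by simp)
  have h := hS1 0 n
  simp only [hdz, mul_ite, mul_one, mul_zero] at h
  rw [Finset.sum_ite_eq' (Finset.range (n+1)) 0 (fun l => S1 n l),
    if_pos (Finset.mem_range.2 (Nat.succ_pos n))] at h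
  exact h.symm

lemma T_add (f g : PowerSeries ℝ) : Tr S1 (f + g) = Tr S1 f + Tr S1 g := by
  ext n
  simp [Tr, coeff_mk, mul_add, Finset.sum_add_distrib, add_div]

lemma T_C (c : ℝ) : Tr S1 (PowerSeries.C c) = PowerSeries.C c := by
  ext n
  simp only [Tr, coeff_mk, PowerSeries.coeff_C]
  rw [Finset.sum_eq_single 0 (fun l hl hne => by rw [if_neg hne, mul_zero])
    (by simp)]
  simp only [Nat.factorial_zero, Nat.cast_one, mul_one, if_pos rfl]
  rw [S1_zero lam hlam S1 hS1]
  by_cases hn : n = 0 <;> simp [hn]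

lemma T_mul (f g : PowerSeries ℝ) : Tr S1 (f * g) = Tr S1 f * Tr S1 g := by
  ext n
  rw [PowerSeries.coeff_mul n (Tr S1 f) (Tr S1 g),
    Finset.Nat.sum_antidiagonal_eq_sum_range_succ_mk]
  simp only [Tr, coeff_mk, Nat.succ_eq_add_one]
  set fc : ℕ → ℝ := fun i => PowerSeries.coeff i f with hfc
  set gc : ℕ → ℝ := fun j => PowerSeries.coeff j g with hgc
  -- LHS rewrite
  have hL : ∀ k ∈ Finset.range (n+1),
      S1 n k * (k.factorial : ℝ) * PowerSeries.coeff k (f * g)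
      = ∑ p ∈ Finset.range (k+1),
          (fun p q => S1 n (p+q) * (((p+q).factorial : ℕ) : ℝ) * fc p * gc q) p (k - p) := by
    intro k _
    rw [PowerSeries.coeff_mul k f g, Finset.Nat.sum_antidiagonal_eq_sum_range_succ_mk,
      Finset.mul_sum]
    refine Finset.sum_congr rfl fun p hp => ?_
    simp only [Finset.mem_range] at hp
    have hpk : p + (k - p) = k := by omega
    dsimp only
    rw [hpk]
    ring
  rw [Finset.sum_congr rfl hL,
    tri_sum' n (fun p q => S1 n (p+q) * (((p+q).factorial : ℕ) : ℝ) * fc p * gc q)]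
  -- pad LHS inner sums and push division inside
  have hL2 : ∀ p ∈ Finset.range (n+1),
      (∑ q ∈ Finset.range (n+1-p),
        (fun p q => S1 n (p+q) * (((p+q).factorial : ℕ) : ℝ) * fc p * gc q) p q)
      = ∑ q ∈ Finset.range (n+1),
          (if q ≤ n - p then S1 n (p+q) * (((p+q).factorial : ℕ) : ℝ) * fc p * gc q else 0) := by
    intro p hp
    simp only [Finset.mem_range] at hp
    rw [sum_ite_le _ (by omega : n - p ≤ n)]
    have : n + 1 - p = (n - p) + 1 := by omega
    rw [this]
  rw [Finset.sum_congr rfl hL2]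
  -- RHS rewrite
  have hR : ∀ a ∈ Finset.range (n+1),
      (∑ k ∈ Finset.range (a+1), S1 a k * (k.factorial : ℝ) * fc k) / (a.factorial : ℝ)
        * ((∑ k ∈ Finset.range (n-a+1), S1 (n-a) k * (k.factorial : ℝ) * gc k)
            / ((n-a).factorial : ℝ))
      = ∑ i ∈ Finset.range (n+1), ∑ j ∈ Finset.range (n+1),
          (if i ≤ a ∧ j ≤ n - a
           then S1 a i * S1 (n-a) j
             * ((i.factorial : ℝ) * (j.factorial : ℝ)
                / ((a.factorial : ℝ) * ((n-a).factorial : ℝ))) * fc i * gc j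
           else 0) := by
    intro a ha
    simp only [Finset.mem_range] at ha
    rw [div_mul_div_comm,
      ← sum_ite_le (fun k => S1 a k * (k.factorial : ℝ) * fc k) (by omega : a ≤ n),
      ← sum_ite_le (fun k => S1 (n-a) k * (k.factorial : ℝ) * gc k) (by omega : n - a ≤ n),
      Finset.sum_mul_sum, Finset.sum_div]
    refine Finset.sum_congr rfl fun i _ => ?_
    rw [Finset.sum_div]
    refine Finset.sum_congr rfl fun j _ => ?_
    by_cases hP : i ≤ a <;> by_cases hQ : j ≤ n - a <;>
      simp only [hP, hQ, true_and, false_and, and_true, and_false, if_true, if_false,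
        zero_mul, mul_zero, zero_div]
    ring
  rw [Finset.sum_congr rfl hR]
  have swap :
      (∑ a ∈ Finset.range (n+1), ∑ i ∈ Finset.range (n+1), ∑ j ∈ Finset.range (n+1),
        (if i ≤ a ∧ j ≤ n - a
         then S1 a i * S1 (n-a) j
           * ((i.factorial : ℝ) * (j.factorial : ℝ)
              / ((a.factorial : ℝ) * ((n-a).factorial : ℝ))) * fc i * gc j
         else 0))
      = ∑ i ∈ Finset.range (n+1), ∑ j ∈ Finset.range (n+1), ∑ a ∈ Finset.range (n+1),
        (if i ≤ a ∧ j ≤ n - a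
         then S1 a i * S1 (n-a) j
           * ((i.factorial : ℝ) * (j.factorial : ℝ)
              / ((a.factorial : ℝ) * ((n-a).factorial : ℝ))) * fc i * gc j
         else 0) :=
    (Finset.sum_comm).trans (Finset.sum_congr rfl fun i _ => Finset.sum_comm)
  rw [swap, Finset.sum_div]
  refine Finset.sum_congr rfl fun i hi => ?_
  rw [Finset.sum_div]
  refine Finset.sum_congr rfl fun j hj => ?_
  simp only [Finset.mem_range] at hi hj
  by_cases hc : i + j ≤ n
  · rw [if_pos (show j ≤ n - i by omega)]
    have hstep : ∀ a ∈ Finset.range (n+1),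
        (if i ≤ a ∧ j ≤ n - a
         then S1 a i * S1 (n-a) j
           * ((i.factorial : ℝ) * (j.factorial : ℝ)
              / ((a.factorial : ℝ) * ((n-a).factorial : ℝ))) * fc i * gc j
         else 0)
        = (if i ≤ a ∧ j ≤ n - a then (n.choose a : ℝ) * S1 a i * S1 (n-a) j else 0)
            * ((i.factorial : ℝ) * (j.factorial : ℝ) / (n.factorial : ℝ) * fc i * gc j) := by
      intro a ha
      simp only [Finset.mem_range] at ha
      by_cases hP : i ≤ a ∧ j ≤ n - a
      · rw [if_pos hP, if_pos hP]
        have hfa : ((n.choose a : ℕ) : ℝ) * (a.factorial : ℝ) * ((n-a).factorial : ℝ)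
            = (n.factorial : ℝ) := by
          exact_mod_cast congrArg (Nat.cast : ℕ → ℝ)
            (Nat.choose_mul_factorial_mul_factorial (by omega : a ≤ n))
        have hna : ((n-a).factorial : ℝ) ≠ 0 := Nat.cast_ne_zero.2 (Nat.factorial_ne_zero _)
        have haf : ((a).factorial : ℝ) ≠ 0 := Nat.cast_ne_zero.2 (Nat.factorial_ne_zero _)
        have hnf : ((n).factorial : ℝ) ≠ 0 := Nat.cast_ne_zero.2 (Nat.factorial_ne_zero _)
        field_simp
        linear_combination (-(S1 a i * S1 (n-a) j
          * fc i * gc j)) * hfa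
      · rw [if_neg hP, if_neg hP, zero_mul]
    rw [Finset.sum_congr rfl hstep, ← Finset.sum_mul, ← S1_conv lam hlam S1 hS1 n i j hc]
    have hcf : (((i+j).choose i : ℕ) : ℝ) * (i.factorial : ℝ) * (j.factorial : ℝ)
        = (((i+j).factorial : ℕ) : ℝ) := by
      have h0 := Nat.choose_mul_factorial_mul_factorial (Nat.le_add_right i j)
      rw [Nat.add_sub_cancel_left] at h0
      exact_mod_cast congrArg (Nat.cast : ℕ → ℝ) h0
    have hnf : ((n).factorial : ℝ) ≠ 0 := Nat.cast_ne_zero.2 (Nat.factorial_ne_zero _)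
    field_simp
    linear_combination (-(S1 n (i+j) * fc i * gc j)) * hcf
  · rw [if_neg (show ¬ j ≤ n - i by omega), zero_div]
    symm
    refine Finset.sum_eq_zero fun a ha => ?_
    simp only [Finset.mem_range] at ha
    rw [if_neg (by omega)]

end TLemmas


lemma dff_one_one (n : ℕ) : dff 1 1 n = if n ≤ 1 then 1 else 0 := by
  match n with
  | 0 => simp [dff_zero]
  | 1 => norm_num [dff_succ, dff_zero]
  | (n+2) =>
    rw [if_neg (by omega)]
    exact Finset.prod_eq_zero (Finset.mem_range.2 (by omega : 1 < n + 2)) (by norm_num)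

lemma dff_neg_one (n : ℕ) : dff 1 (-1) n = (-1)^n * n.factorial := by
  induction n with
  | zero => simp [dff_zero]
  | succ n ih =>
    rw [dff_succ, ih, Nat.factorial_succ]
    push_cast
    ring

lemma dff_two (n : ℕ) : dff 1 2 n = if n = 0 then 1 else if n = 1 then 2 else
    if n = 2 then 2 else 0 := by
  match n with
  | 0 => simp [dff_zero]
  | 1 => norm_num [dff_succ, dff_zero]
  | 2 => norm_num [dff_succ, dff_zero]
  | (n+3) =>
    simp only [Nat.succ_ne_zero, if_false, show n+3 ≠ 1 by omega, show n+3 ≠ 2 by omega]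
    exact Finset.prod_eq_zero (Finset.mem_range.2 (by omega : 2 < n + 3)) (by norm_num)

lemma onePlus_one_eq : onePlus 1 = 1 + PowerSeries.X := by
  ext n
  simp only [onePlus, coeff_mk, map_add, PowerSeries.coeff_one, PowerSeries.coeff_X, dff_one_one]
  match n with
  | 0 => norm_num
  | 1 => norm_num
  | (n+2) =>
    have h1 : ¬ (n + 2 ≤ 1) := by omega
    have h2 : ¬ (n + 2 = 0) := by omega
    have h3 : ¬ (n + 2 = 1) := by omega
    simp [h1, h2, h3]

lemma onePlus_mul_X (y : ℝ) : onePlus (y + 1) = onePlus y * (1 + PowerSeries.X) := by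
  ext n
  rw [mul_add, mul_one, map_add]
  match n with
  | 0 => simp [onePlus, coeff_mk, dff_zero, PowerSeries.coeff_zero_mul_X]
  | (n+1) =>
    rw [PowerSeries.coeff_succ_mul_X]
    simp only [onePlus, coeff_mk]
    rw [dff_one_succ, dff_succ, Nat.factorial_succ]
    have h1 : (n.factorial : ℝ) ≠ 0 := Nat.cast_ne_zero.2 (Nat.factorial_ne_zero _)
    field_simp
    push_cast
    ring

lemma onePlus_neg_one : onePlus (-1) * (1 + PowerSeries.X) = 1 := by
  have := onePlus_mul_X (-1)
  rw [show (-1:ℝ) + 1 = 0 by ring] at this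
  rw [← this]
  ext n
  simp only [onePlus, coeff_mk, PowerSeries.coeff_one]
  match n with
  | 0 => simp [dff_zero]
  | (n+1) =>
    rw [if_neg (Nat.succ_ne_zero n)]
    have : dff 1 0 (n+1) = 0 :=
      Finset.prod_eq_zero (Finset.mem_range.2 (Nat.succ_pos n)) (by norm_num)
    simp [this]

lemma onePlus_two_eq : onePlus 2 = (1 + PowerSeries.X)^2 := by
  ext n
  rw [show ((1 + PowerSeries.X)^2 : PowerSeries ℝ)
      = 1 + 2*PowerSeries.X + PowerSeries.X^2 by ring]
  simp only [onePlus, coeff_mk, map_add, PowerSeries.coeff_one, dff_two,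
    PowerSeries.coeff_X_pow, map_mul]
  match n with
  | 0 => norm_num
  | 1 =>
    have : (PowerSeries.coeff 1) (2 * PowerSeries.X : PowerSeries ℝ) = 2 := by
      rw [show (2 : PowerSeries ℝ) = PowerSeries.C 2 by simp [map_ofNat],
        PowerSeries.coeff_C_mul, PowerSeries.coeff_X]
      norm_num
    rw [this]
    norm_num
  | 2 =>
    have : (PowerSeries.coeff 2) (2 * PowerSeries.X : PowerSeries ℝ) = 0 := by
      rw [show (2 : PowerSeries ℝ) = PowerSeries.C 2 by simp [map_ofNat],
        PowerSeries.coeff_C_mul, PowerSeries.coeff_X]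
      norm_num
    rw [this]
    norm_num
  | (n+3) =>
    have : (PowerSeries.coeff (n+3)) (2 * PowerSeries.X : PowerSeries ℝ) = 0 := by
      rw [show (2 : PowerSeries ℝ) = PowerSeries.C 2 by simp [map_ofNat],
        PowerSeries.coeff_C_mul, PowerSeries.coeff_X]
      simp [show ¬ (n+3 = 1) by omega]
    rw [this]
    norm_num [show ¬ (n+3 = 0) by omega, show ¬ (n+3 = 1) by omega, show ¬ (n+3 = 2) by omega]

lemma onePlus_add_nat (x : ℝ) (r : ℕ) :
    onePlus (x + r) = onePlus x * (1 + PowerSeries.X)^r := by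
  induction r with
  | zero => simp
  | succ r ih =>
    have h1 : (x + ((r:ℕ)+1 : ℕ)) = (x + r) + 1 := by push_cast; ring
    rw [h1, onePlus_mul_X, ih, pow_succ, mul_assoc]

lemma onePlus_two_factor :
    onePlus 2 + 1 = (1 + PowerSeries.X) * ((1 + PowerSeries.X) + onePlus (-1)) := by
  rw [mul_add, ← sq, onePlus_two_eq, mul_comm _ (onePlus (-1)), onePlus_neg_one]


section Final
variable (lam : ℝ) (hlam : lam ≠ 0) (S1 : ℕ → ℕ → ℝ)
  (hS1 : ∀ (x : ℝ) (n : ℕ), dff 1 x n = ∑ l ∈ Finset.range (n + 1), S1 n l * dff lam x l)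
include hlam hS1

lemma T_one : Tr S1 (1 : PowerSeries ℝ) = 1 := by
  rw [← map_one (PowerSeries.C (R := ℝ)), T_C lam hlam S1 hS1, map_one]

lemma T_pow (f : PowerSeries ℝ) (m : ℕ) : Tr S1 (f ^ m) = (Tr S1 f) ^ m := by
  induction m with
  | zero => simpa using T_one lam hlam S1 hS1
  | succ m ih => rw [pow_succ, pow_succ, T_mul lam hlam S1 hS1, ih]

lemma T_degExp (x : ℝ) : Tr S1 (degExp lam x) = onePlus x := by
  ext n
  simp only [Tr, onePlus, degExp, coeff_mk]
  congr 1
  rw [hS1 x n]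
  refine Finset.sum_congr rfl fun k _ => ?_
  have : (k.factorial : ℝ) ≠ 0 := Nat.cast_ne_zero.2 (Nat.factorial_ne_zero _)
  field_simp

end Final

/-- `C_n^{(r)}(x) = Σ_{k=0}^{n} E_{k,λ}^{(r)}(x) S_{1,λ}(n,k)`. -/
theorem stmt_4 (lam : ℝ) (hlam : lam ≠ 0) (r : ℕ) (hr : 1 ≤ r)
    (S1 : ℕ → ℕ → ℝ)
    (hS1 : ∀ (x : ℝ) (n : ℕ), dff 1 x n = ∑ l ∈ Finset.range (n + 1), S1 n l * dff lam x l)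
    (E C : ℝ → ℕ → ℝ)
    (hE : ∀ x : ℝ, (degExp lam 1 + degExp lam (-1)) ^ r *
      PowerSeries.mk (fun n => E x n / n.factorial) = 2 ^ r * degExp lam x)
    (hC : ∀ x : ℝ, (onePlus 2 + 1) ^ r *
      PowerSeries.mk (fun n => C x n / n.factorial) = 2 ^ r * onePlus (x + r))
    (n : ℕ) (x : ℝ) :
    C x n = ∑ k ∈ Finset.range (n + 1), E x k * S1 n k := by
  have h2C : (2 : PowerSeries ℝ) = PowerSeries.C 2 := by simp [map_ofNat]
  -- transform hE by Tr S1
  have key1 : ((1 + PowerSeries.X) + onePlus (-1)) ^ r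
      * Tr S1 (PowerSeries.mk (fun n => E x n / n.factorial))
      = 2 ^ r * onePlus x := by
    have h := congrArg (Tr S1) (hE x)
    rw [T_mul lam hlam S1 hS1, T_pow lam hlam S1 hS1, T_add lam hlam S1 hS1,
      T_degExp lam hlam S1 hS1, T_degExp lam hlam S1 hS1, onePlus_one_eq] at h
    rw [h2C, ← map_pow, T_mul lam hlam S1 hS1, T_C lam hlam S1 hS1,
      T_degExp lam hlam S1 hS1] at h
    rw [h, h2C, map_pow]
  -- main identity
  have key2 : (onePlus 2 + 1) ^ r * PowerSeries.mk (fun n => C x n / n.factorial)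
      = (onePlus 2 + 1) ^ r * Tr S1 (PowerSeries.mk (fun n => E x n / n.factorial)) := by
    rw [hC x, onePlus_add_nat, onePlus_two_factor, mul_pow, mul_assoc, key1]
    ring
  have hne : ((onePlus 2 + 1 : PowerSeries ℝ)) ^ r ≠ 0 := by
    apply pow_ne_zero
    intro h0
    have := congrArg (PowerSeries.coeff 0) h0
    simp only [map_add, PowerSeries.coeff_one, if_pos rfl, onePlus, coeff_mk, dff_zero,
      map_zero] at this
    norm_num at this
  have hfin := mul_left_cancel₀ hne key2
  have hcoeff := congrArg (PowerSeries.coeff n) hfin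
  simp only [Tr, coeff_mk] at hcoeff
  have hnf : ((n.factorial : ℕ) : ℝ) ≠ 0 := Nat.cast_ne_zero.2 (Nat.factorial_ne_zero _)
  rw [div_eq_div_iff hnf hnf] at hcoeff
  have h3 := mul_right_cancel₀ hnf hcoeff
  rw [h3]
  refine Finset.sum_congr rfl fun k _ => ?_
  have hkf : ((k.factorial : ℕ) : ℝ) ≠ 0 := Nat.cast_ne_zero.2 (Nat.factorial_ne_zero _)
  field_simp
end

section
/- For every integer n ≥ 0, every integer r ≥ 2 and every real number x, E_{n,λ}^{(r)}(x+2) + E_{n,λ}^{(r)}(x) = 2·E_{n,λ}^{(r−1)}(x+1). -/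
open Finset PowerSeries

lemma dff_vandermonde (lam a b : ℝ) (n : ℕ) :
    dff lam (a + b) n
      = ∑ k ∈ Finset.range (n+1), (n.choose k : ℝ) * dff lam a k * dff lam b (n - k) := by
  induction n with
  | zero => simp [dff]
  | succ n ih =>
    rw [dff_succ, ih, Finset.sum_mul]
    have key : ∀ k ∈ Finset.range (n+1),
        (n.choose k : ℝ) * dff lam a k * dff lam b (n - k) * (a + b - n * lam)
        = (n.choose k : ℝ) * (dff lam a (k+1) * dff lam b (n - k))
          + (n.choose k : ℝ) * (dff lam a k * dff lam b (n + 1 - k)) := by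
      intro k hk
      rw [Finset.mem_range] at hk
      have hk' : k ≤ n := Nat.lt_succ_iff.mp hk
      have h2 : dff lam b (n + 1 - k) = dff lam b (n - k) * (b - ((n - k : ℕ) : ℝ) * lam) := by
        rw [Nat.succ_sub hk', dff_succ]
      have h3 : ((n - k : ℕ) : ℝ) = (n : ℝ) - k := by
        push_cast [hk']; ring
      rw [dff_succ, h2, h3]; ring
    rw [Finset.sum_congr rfl key, Finset.sum_add_distrib]
    have hshift : ∑ k ∈ Finset.range (n+1), (n.choose k : ℝ) * (dff lam a k * dff lam b (n + 1 - k))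
        = dff lam b (n+1)
          + ∑ k ∈ Finset.range (n+1), (n.choose (k+1) : ℝ) * (dff lam a (k+1) * dff lam b (n - k)) := by
      rw [Finset.sum_range_succ' (fun k => (n.choose k : ℝ) * (dff lam a k * dff lam b (n + 1 - k))) n]
      rw [Finset.sum_range_succ (fun k => (n.choose (k+1) : ℝ) * (dff lam a (k+1) * dff lam b (n - k))) n]
      have e1 : ∀ i ∈ Finset.range n,
          (n.choose (i+1) : ℝ) * (dff lam a (i+1) * dff lam b (n + 1 - (i+1)))
          = (n.choose (i+1) : ℝ) * (dff lam a (i+1) * dff lam b (n - i)) := by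
        intro i hi
        have h : n + 1 - (i+1) = n - i := by omega
        rw [h]
      rw [Finset.sum_congr rfl e1]
      have hz : ((n.choose (n+1) : ℕ) : ℝ) = 0 := by simp [Nat.choose_succ_self]
      have h1 : dff lam a 0 = 1 := by simp [dff]
      rw [hz, h1]
      simp only [Nat.choose_zero_right, Nat.cast_one, Nat.sub_zero, one_mul, zero_mul, add_zero]
      ring
    have hassoc : ∑ k ∈ Finset.range (n+1), (n.choose k : ℝ) * (dff lam a k * dff lam b (n + 1 - k))
        = ∑ k ∈ Finset.range (n+1), (n.choose k : ℝ) * dff lam a k * dff lam b (n + 1 - k) := by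
      apply Finset.sum_congr rfl; intro k hk; ring
    rw [← hassoc] at *
    rw [hshift]
    rw [Finset.sum_range_succ' (fun k => ((n+1).choose k : ℝ) * dff lam a k * dff lam b (n + 1 - k)) (n+1)]
    have hc : ∀ k, (((n+1).choose (k+1) : ℕ) : ℝ) = (n.choose k : ℝ) + (n.choose (k+1) : ℝ) := by
      intro k; rw [Nat.choose_succ_succ]; push_cast; ring
    simp only [hc, Nat.choose_zero_right, Nat.cast_one]
    have hs : ∀ k ∈ Finset.range (n+1),
        ((n.choose k : ℝ) + (n.choose (k+1) : ℝ)) * dff lam a (k+1) * dff lam b (n + 1 - (k+1))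
        = (n.choose k : ℝ) * (dff lam a (k+1) * dff lam b (n - k))
          + (n.choose (k+1) : ℝ) * (dff lam a (k+1) * dff lam b (n - k)) := by
      intro k hk
      have h : n + 1 - (k+1) = n - k := by omega
      rw [h]; ring
    rw [Finset.sum_congr rfl hs, Finset.sum_add_distrib]
    have h1 : dff lam a 0 = 1 := by simp [dff]
    rw [h1]
    simp only [Nat.sub_zero, one_mul]
    ring

lemma degExp_mul (lam a b : ℝ) : degExp lam a * degExp lam b = degExp lam (a + b) := by
  ext n
  rw [PowerSeries.coeff_mul, Finset.Nat.sum_antidiagonal_eq_sum_range_succ_mk]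
  simp only [degExp, PowerSeries.coeff_mk]
  rw [dff_vandermonde, Finset.sum_div]
  apply Finset.sum_congr rfl
  intro k hk
  rw [Finset.mem_range] at hk
  have hk' : k ≤ n := Nat.lt_succ_iff.mp hk
  have hfac : (n.choose k : ℝ) * k.factorial * (n - k).factorial = n.factorial := by
    exact_mod_cast congrArg (Nat.cast (R := ℝ)) (Nat.choose_mul_factorial_mul_factorial hk')
  have h1 : (k.factorial : ℝ) ≠ 0 := Nat.cast_ne_zero.mpr k.factorial_ne_zero
  have h2 : ((n - k).factorial : ℝ) ≠ 0 := Nat.cast_ne_zero.mpr (n - k).factorial_ne_zero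
  have h3 : (n.factorial : ℝ) ≠ 0 := Nat.cast_ne_zero.mpr n.factorial_ne_zero
  field_simp
  rw [← hfac]
  ring

/-- `E_{n,λ}^{(r)}(x+2) + E_{n,λ}^{(r)}(x) = 2 E_{n,λ}^{(r-1)}(x+1)` for `r ≥ 2`. -/
theorem stmt_6 (lam : ℝ) (hlam : lam ≠ 0)
    (E : ℕ → ℝ → ℕ → ℝ)
    (hE : ∀ r : ℕ, 1 ≤ r → ∀ x : ℝ, (degExp lam 1 + degExp lam (-1)) ^ r *
      PowerSeries.mk (fun n => E r x n / n.factorial) = 2 ^ r * degExp lam x)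
    (n r : ℕ) (hr : 2 ≤ r) (x : ℝ) :
    E r (x + 2) n + E r x n = 2 * E (r - 1) (x + 1) n := by
  set S : PowerSeries ℝ := degExp lam 1 + degExp lam (-1) with hS
  have hS0 : PowerSeries.constantCoeff S = 2 := by
    simp [hS, degExp, dff, PowerSeries.constantCoeff_mk]
    norm_num
  have hSne : S ≠ 0 := by
    intro h; rw [h] at hS0; simp at hS0
  have hSr : S ^ r ≠ 0 := pow_ne_zero _ hSne
  have hA := hE r (by omega) (x + 2)
  have hB := hE r (by omega) x
  have hC := hE (r - 1) (by omega) (x + 1)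
  have hrr : r = (r - 1) + 1 := by omega
  have key : S ^ r * (PowerSeries.mk (fun n => E r (x+2) n / n.factorial)
        + PowerSeries.mk (fun n => E r x n / n.factorial))
      = S ^ r * (2 * PowerSeries.mk (fun n => E (r-1) (x+1) n / n.factorial)) := by
    rw [mul_add, hA, hB]
    calc (2:PowerSeries ℝ) ^ r * degExp lam (x + 2) + 2 ^ r * degExp lam x
        = 2 ^ r * (degExp lam 1 * degExp lam (x+1) + degExp lam (-1) * degExp lam (x+1)) := by
          rw [degExp_mul, degExp_mul, show (-1 : ℝ) + (x + 1) = x by ring,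
            show (1 : ℝ) + (x + 1) = x + 2 by ring]
          ring
      _ = S ^ r * (2 * PowerSeries.mk (fun n => E (r-1) (x+1) n / n.factorial)) := by
          rw [← add_mul, ← hS]
          have hpow : S ^ r = S ^ (r-1) * S := by rw [← pow_succ, ← hrr]
          have h2pow : (2 : PowerSeries ℝ) ^ r = 2 ^ (r-1) * 2 := by rw [← pow_succ, ← hrr]
          rw [hpow, h2pow,
            show S ^ (r-1) * S * (2 * PowerSeries.mk (fun n => E (r-1) (x+1) n / n.factorial))
            = (S * 2) * (S ^ (r-1) * PowerSeries.mk (fun n => E (r-1) (x+1) n / n.factorial)) by ring,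
            hC]
          ring
  have heq := mul_left_cancel₀ hSr key
  have hcoeff := congrArg (PowerSeries.coeff n) heq
  simp only [map_add, PowerSeries.coeff_mk] at hcoeff
  rw [two_mul, map_add, PowerSeries.coeff_mk] at hcoeff
  have h3 : (n.factorial : ℝ) ≠ 0 := Nat.cast_ne_zero.mpr n.factorial_ne_zero
  field_simp at hcoeff
  linarith
end

section
/- For every integer n ≥ 0, every integer r ≥ 1 and every real number x, Σ_{k=0}^{n} C_k^{(r)}(x)·S_{1,λ}(n,k) = Σ_{k=0}^{n} E_{k,λ}^{(r)}(x)·S_{J,λ}^{(1)}(n,k). -/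
open Finset PowerSeries

lemma coeff_pcomp (f g : ℝ⟦X⟧) (n : ℕ) :
    coeff n (pcomp f g) = ∑ k ∈ range (n+1), coeff k f * coeff n (g^k) := by
  simp [pcomp]

lemma coeff_pow_zero {g : ℝ⟦X⟧} (hg : constantCoeff g = 0) {n k : ℕ} (h : n < k) :
    coeff n (g ^ k) = 0 := by
  obtain ⟨c, rfl⟩ := X_dvd_iff.mpr hg
  rw [mul_pow, coeff_X_pow_mul', if_neg (by omega)]

lemma coeff_eval₂ {g : ℝ⟦X⟧} (hg : constantCoeff g = 0) (p : Polynomial ℝ) (n : ℕ) :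
    coeff n (Polynomial.eval₂ (C : ℝ →+* ℝ⟦X⟧) g p) =
      ∑ k ∈ range (n+1), p.coeff k * coeff n (g^k) := by
  have hdeg : p.natDegree < max (p.natDegree + 1) (n + 1) := lt_of_lt_of_le (Nat.lt_succ_self _) (le_max_left _ _)
  rw [Polynomial.eval₂_eq_sum_range' (C : ℝ →+* ℝ⟦X⟧) hdeg g, map_sum]
  simp only [coeff_C_mul]
  refine (Finset.sum_subset ?_ ?_).symm
  · intro i hi; simp only [mem_range] at hi ⊢; omega
  · intro i _ hi
    simp only [mem_range, not_lt] at hi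
    rw [coeff_pow_zero hg (by omega), mul_zero]

lemma coeff_pcomp_trunc {g : ℝ⟦X⟧} (hg : constantCoeff g = 0) (f : ℝ⟦X⟧) {n N : ℕ} (hN : n < N) :
    coeff n (pcomp f g) = coeff n (Polynomial.eval₂ (C : ℝ →+* ℝ⟦X⟧) g (trunc N f)) := by
  rw [coeff_pcomp, coeff_eval₂ hg]
  refine Finset.sum_congr rfl fun k hk => ?_
  rw [coeff_trunc, if_pos (by simp only [mem_range] at hk; omega)]




lemma eval₂_congr_coeff {g : ℝ⟦X⟧} (hg : constantCoeff g = 0) {p q : Polynomial ℝ} {n : ℕ}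
    (h : ∀ k ≤ n, p.coeff k = q.coeff k) :
    coeff n (Polynomial.eval₂ (C : ℝ →+* ℝ⟦X⟧) g p) = coeff n (Polynomial.eval₂ (C : ℝ →+* ℝ⟦X⟧) g q) := by
  rw [coeff_eval₂ hg, coeff_eval₂ hg]
  exact Finset.sum_congr rfl fun k hk => by
    rw [h k (by simp only [mem_range] at hk; omega)]

lemma pcomp_one (g : ℝ⟦X⟧) : pcomp 1 g = 1 := by
  ext n
  rw [coeff_pcomp, Finset.sum_eq_single 0]
  · simp
  · intro b _ hb; simp [coeff_one, hb]
  · simp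

lemma pcomp_add (f₁ f₂ g : ℝ⟦X⟧) : pcomp (f₁ + f₂) g = pcomp f₁ g + pcomp f₂ g := by
  ext n
  simp [coeff_pcomp, add_mul, Finset.sum_add_distrib]

lemma pcomp_smul (c : ℝ) (f g : ℝ⟦X⟧) : pcomp (c • f) g = c • pcomp f g := by
  ext n
  simp [coeff_pcomp, Finset.mul_sum, mul_assoc]

lemma pcomp_X {g : ℝ⟦X⟧} (hg : constantCoeff g = 0) : pcomp X g = g := by
  ext n
  rw [coeff_pcomp, Finset.sum_eq_single 1]
  · simp
  · intro b _ hb; simp [coeff_X, hb]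
  · intro h1
    simp only [mem_range, not_lt] at h1
    have hn : n = 0 := by omega
    subst hn
    simpa [coeff_X, coeff_zero_eq_constantCoeff] using hg

lemma pcomp_mul {g : ℝ⟦X⟧} (hg : constantCoeff g = 0) (f₁ f₂ : ℝ⟦X⟧) :
    pcomp (f₁ * f₂) g = pcomp f₁ g * pcomp f₂ g := by
  ext n
  rw [coeff_pcomp_trunc hg _ (Nat.lt_succ_self n),
    eval₂_congr_coeff hg (q := trunc (n+1) f₁ * trunc (n+1) f₂)
      (fun k hk => by
        rw [coeff_trunc, if_pos (by omega), PowerSeries.coeff_mul, Polynomial.coeff_mul]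
        refine Finset.sum_congr rfl fun ij hij => ?_
        rw [Finset.HasAntidiagonal.mem_antidiagonal] at hij
        rw [coeff_trunc, coeff_trunc, if_pos (by omega), if_pos (by omega)]),
    Polynomial.eval₂_mul, PowerSeries.coeff_mul, PowerSeries.coeff_mul]
  refine Finset.sum_congr rfl fun ij hij => ?_
  rw [Finset.HasAntidiagonal.mem_antidiagonal] at hij
  rw [← coeff_pcomp_trunc hg f₁ (by omega), ← coeff_pcomp_trunc hg f₂ (by omega)]

lemma pcomp_pow {g : ℝ⟦X⟧} (hg : constantCoeff g = 0) (f : ℝ⟦X⟧) (k : ℕ) :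
    pcomp (f ^ k) g = (pcomp f g) ^ k := by
  induction k with
  | zero => simp [pcomp_one]
  | succ m ih => rw [pow_succ, pow_succ, pcomp_mul hg, ih]

lemma constantCoeff_pcomp {g : ℝ⟦X⟧} (hg : constantCoeff g = 0) (f : ℝ⟦X⟧) :
    constantCoeff (pcomp f g) = constantCoeff f := by
  rw [← coeff_zero_eq_constantCoeff, coeff_pcomp]
  simp

lemma pcomp_assoc {g h : ℝ⟦X⟧} (hg : constantCoeff g = 0) (hh : constantCoeff h = 0)
    (f : ℝ⟦X⟧) : pcomp f (pcomp g h) = pcomp (pcomp f g) h := by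
  ext n
  rw [coeff_pcomp, coeff_pcomp]
  calc ∑ k ∈ range (n+1), coeff k f * coeff n ((pcomp g h) ^ k)
      = ∑ k ∈ range (n+1), ∑ j ∈ range (n+1),
          coeff k f * (coeff j (g ^ k) * coeff n (h ^ j)) := by
        refine Finset.sum_congr rfl fun k _ => ?_
        rw [← pcomp_pow hh, coeff_pcomp, Finset.mul_sum]
    _ = ∑ j ∈ range (n+1), (∑ k ∈ range (j+1), coeff k f * coeff j (g ^ k)) * coeff n (h ^ j) := by
        rw [Finset.sum_comm]
        refine Finset.sum_congr rfl fun j hj => ?_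
        rw [Finset.sum_mul]
        have hsub : ∑ k ∈ range (j+1), coeff k f * coeff j (g^k) * coeff n (h^j)
            = ∑ k ∈ range (n+1), coeff k f * coeff j (g^k) * coeff n (h^j) :=
          Finset.sum_subset (Finset.range_subset_range.mpr (by simp only [mem_range] at hj; omega))
            (fun k _ hk => by
              simp only [mem_range, not_lt] at hk
              rw [coeff_pow_zero hg (by omega), mul_zero, zero_mul])
        rw [hsub]
        exact Finset.sum_congr rfl fun k _ => by ring
    _ = ∑ j ∈ range (n+1), coeff j (pcomp f g) * coeff n (h ^ j) := by
        refine Finset.sum_congr rfl fun j _ => ?_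
        rw [coeff_pcomp]



lemma coeff_onePlus (y : ℝ) (n : ℕ) : coeff n (onePlus y) = dff 1 y n / n.factorial := by
  simp [onePlus]

lemma constantCoeff_onePlus (y : ℝ) : constantCoeff (onePlus y) = 1 := by
  rw [← coeff_zero_eq_constantCoeff, coeff_onePlus, dff_zero]; simp

lemma onePlus_zero : onePlus 0 = 1 := by
  ext n
  rw [coeff_onePlus]
  cases n with
  | zero => simp [dff_zero]
  | succ m =>
    rw [PowerSeries.coeff_one, if_neg (Nat.succ_ne_zero m)]
    have : dff 1 0 (m+1) = 0 := by
      rw [dff]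
      refine Finset.prod_eq_zero (Finset.mem_range.mpr (Nat.succ_pos m)) ?_
      simp
    rw [this, zero_div]

-- coefficient of (1+X) * derivative f
lemma coeff_DE (f : ℝ⟦X⟧) (n : ℕ) :
    coeff n ((1 + X) * d⁄dX ℝ f) =
      coeff (n+1) f * (n+1) + coeff n f * n := by
  rw [add_mul, one_mul, map_add]
  cases n with
  | zero =>
    have h0 : coeff 0 (X * d⁄dX ℝ f) = 0 := by
      rw [coeff_zero_eq_constantCoeff, map_mul]
      simp
    rw [h0, coeff_derivative]
    push_cast; ring
  | succ m =>
    rw [coeff_succ_X_mul, coeff_derivative, coeff_derivative]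
    push_cast; ring

lemma deriv_onePlus (a : ℝ) : (1 + X) * d⁄dX ℝ (onePlus a) = a • onePlus a := by
  ext n
  rw [coeff_DE, map_smul, smul_eq_mul, coeff_onePlus, coeff_onePlus, dff_succ]
  have h1 : ((n+1).factorial : ℝ) = (n+1) * n.factorial := by
    rw [Nat.factorial_succ]; push_cast; ring
  rw [h1]
  have h2 : (n.factorial : ℝ) ≠ 0 := Nat.cast_ne_zero.mpr (Nat.factorial_ne_zero n)
  field_simp
  ring

lemma eq_onePlus_of_DE {f : ℝ⟦X⟧} {a : ℝ} (hf : (1 + X) * d⁄dX ℝ f = a • f)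
    (h0 : constantCoeff f = 1) : f = onePlus a := by
  ext n
  induction n with
  | zero =>
    rw [coeff_zero_eq_constantCoeff, h0, constantCoeff_onePlus]
  | succ m ih =>
    have hm := congrArg (coeff m) hf
    rw [coeff_DE, map_smul, smul_eq_mul, ih, coeff_onePlus] at hm
    -- hm : coeff (m+1) f * (m+1) + (dff 1 a m / m!) * m = a * (dff 1 a m / m!)
    have h2 : (m.factorial : ℝ) ≠ 0 := Nat.cast_ne_zero.mpr (Nat.factorial_ne_zero m)
    have h3 : ((m:ℝ) + 1) ≠ 0 := by positivity
    have : coeff (m+1) f = dff 1 a m * (a - m) / ((m+1) * m.factorial) := by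
      field_simp at hm ⊢
      push_cast at hm ⊢
      nlinarith [hm]
    rw [this, coeff_onePlus, dff_succ]
    have h4 : ((m+1).factorial : ℝ) = (m+1) * m.factorial := by
      rw [Nat.factorial_succ]; push_cast; ring
    rw [h4]
    push_cast
    ring




lemma onePlus_mul (a b : ℝ) : onePlus a * onePlus b = onePlus (a + b) := by
  refine eq_onePlus_of_DE ?_ (by rw [map_mul, constantCoeff_onePlus, constantCoeff_onePlus, mul_one])
  have hd : d⁄dX ℝ (onePlus a * onePlus b) =
      onePlus a * d⁄dX ℝ (onePlus b) + onePlus b * d⁄dX ℝ (onePlus a) := by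
    rw [Derivation.leibniz, smul_eq_mul, smul_eq_mul]
  rw [hd, mul_add]
  calc (1 + X) * (onePlus a * d⁄dX ℝ (onePlus b)) + (1 + X) * (onePlus b * d⁄dX ℝ (onePlus a))
      = onePlus a * ((1 + X) * d⁄dX ℝ (onePlus b)) + onePlus b * ((1 + X) * d⁄dX ℝ (onePlus a)) := by
        ring
    _ = (a + b) • (onePlus a * onePlus b) := by
        rw [deriv_onePlus, deriv_onePlus, mul_smul_comm, mul_smul_comm, add_smul]
        rw [mul_comm (onePlus b) (onePlus a), add_comm]

lemma pcomp_deriv {g : ℝ⟦X⟧} (hg : constantCoeff g = 0) (f : ℝ⟦X⟧) :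
    d⁄dX ℝ (pcomp f g) = pcomp (d⁄dX ℝ f) g * d⁄dX ℝ g := by
  ext n
  rw [coeff_derivative, coeff_pcomp_trunc hg f (show n+1 < n+2 by omega)]
  rw [← coeff_derivative]
  have hD : d⁄dX ℝ (Polynomial.eval₂ (C : ℝ →+* ℝ⟦X⟧) g (trunc (n+2) f)) =
      (∑ j ∈ range (n+1), C (coeff j (d⁄dX ℝ f)) * g ^ j) * d⁄dX ℝ g := by
    rw [eval₂_trunc_eq_sum_range, map_sum]
    have hterm : ∀ i, d⁄dX ℝ (C (coeff i f) * g ^ i) =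
        C (coeff i f) * ((i : ℝ⟦X⟧) * (g ^ (i-1) * d⁄dX ℝ g)) := by
      intro i
      rw [Derivation.leibniz, Derivation.leibniz_pow, derivative_C, smul_zero, add_zero,
        smul_eq_mul, nsmul_eq_mul, smul_eq_mul]
    rw [Finset.sum_congr rfl fun i _ => hterm i, Finset.sum_range_succ']
    simp only [Nat.cast_zero, zero_mul, mul_zero, add_zero, Nat.add_sub_cancel]
    rw [Finset.sum_mul]
    refine Finset.sum_congr rfl fun j _ => ?_
    rw [coeff_derivative, map_mul, ← map_natCast (C : ℝ →+* ℝ⟦X⟧) (j+1)]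
    push_cast
    ring
  rw [hD, PowerSeries.coeff_mul, PowerSeries.coeff_mul]
  refine Finset.sum_congr rfl fun ij hij => ?_
  rw [Finset.HasAntidiagonal.mem_antidiagonal] at hij
  congr 1
  rw [coeff_pcomp_trunc hg (d⁄dX ℝ f) (show ij.1 < n+1 by omega), eval₂_trunc_eq_sum_range]

lemma pcomp_onePlus (a b : ℝ) :
    pcomp (onePlus b) (onePlus a - 1) = onePlus (a * b) := by
  set u : ℝ⟦X⟧ := onePlus a - 1 with hu
  have hu0 : constantCoeff u = 0 := by
    rw [hu, map_sub, constantCoeff_onePlus, map_one, sub_self]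
  have h1u : 1 + u = onePlus a := by rw [hu]; ring
  refine eq_onePlus_of_DE ?_ (by rw [constantCoeff_pcomp hu0, constantCoeff_onePlus])
  have hDu : d⁄dX ℝ u = d⁄dX ℝ (onePlus a) := by
    rw [hu, map_sub, Derivation.map_one_eq_zero, sub_zero]
  calc (1 + X) * d⁄dX ℝ (pcomp (onePlus b) u)
      = pcomp (d⁄dX ℝ (onePlus b)) u * ((1 + X) * d⁄dX ℝ (onePlus a)) := by
        rw [pcomp_deriv hu0, hDu]; ring
    _ = a • (pcomp (d⁄dX ℝ (onePlus b)) u * pcomp (1 + X) u) := by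
        rw [deriv_onePlus, pcomp_add, pcomp_one, pcomp_X hu0, h1u, mul_smul_comm]
    _ = a • pcomp ((1 + X) * d⁄dX ℝ (onePlus b)) u := by
        rw [pcomp_mul hu0, mul_comm]
    _ = (a * b) • pcomp (onePlus b) u := by
        rw [deriv_onePlus, pcomp_smul, smul_smul]




lemma pcomp_rescale (c : ℝ) (f g : ℝ⟦X⟧) : pcomp (rescale c f) g = pcomp f (c • g) := by
  ext n
  rw [coeff_pcomp, coeff_pcomp]
  refine Finset.sum_congr rfl fun k _ => ?_
  rw [coeff_rescale, smul_pow, map_smul, smul_eq_mul]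
  ring

lemma constantCoeff_degLog (lam : ℝ) : constantCoeff (degLog lam) = 0 := by
  rw [← coeff_zero_eq_constantCoeff]
  simp [degLog]

lemma degExp_rescale {lam : ℝ} (hlam : lam ≠ 0) (y : ℝ) :
    degExp lam y = rescale lam (onePlus (y / lam)) := by
  ext n
  rw [coeff_rescale, coeff_onePlus]
  have key : lam ^ n * dff 1 (y / lam) n = dff lam y n := by
    rw [dff, dff, show lam ^ n = ∏ _i ∈ range n, lam from by
      rw [Finset.prod_const, Finset.card_range], ← Finset.prod_mul_distrib]
    refine Finset.prod_congr rfl fun i _ => ?_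
    field_simp
  simp only [degExp, coeff_mk]
  rw [← key]
  ring

lemma smul_degLog {lam : ℝ} (hlam : lam ≠ 0) :
    lam • degLog lam = onePlus lam - 1 := by
  ext n
  rw [map_smul, smul_eq_mul, map_sub, coeff_onePlus]
  simp only [degLog, coeff_mk]
  cases n with
  | zero => simp [dff]
  | succ m =>
    rw [PowerSeries.coeff_one, if_neg (Nat.succ_ne_zero m), if_neg (Nat.succ_ne_zero m)]
    have key : lam * (lam ^ m * oneFall lam (m+1)) = dff 1 lam (m+1) := by
      rw [oneFall, dff, ← mul_assoc, ← pow_succ', show lam ^ (m+1) = ∏ _i ∈ range (m+1), lam from by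
        rw [Finset.prod_const, Finset.card_range], ← Finset.prod_mul_distrib]
      refine Finset.prod_congr rfl fun i _ => ?_
      field_simp
    rw [Nat.add_sub_cancel, sub_zero, ← key]
    ring

lemma pcomp_degExp_degLog {lam : ℝ} (hlam : lam ≠ 0) (y : ℝ) :
    pcomp (degExp lam y) (degLog lam) = onePlus y := by
  rw [degExp_rescale hlam, pcomp_rescale, smul_degLog hlam, pcomp_onePlus]
  congr 1
  field_simp

lemma dff_eval (lam x : ℝ) (l : ℕ) :
    Polynomial.eval x (∏ i ∈ range l, (Polynomial.X - Polynomial.C ((i : ℝ) * lam))) =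
      dff lam x l := by
  rw [Polynomial.eval_prod, dff]
  exact Finset.prod_congr rfl fun i _ => by simp

lemma lin_indep_dff (lam : ℝ) (c : ℕ → ℝ) :
    ∀ N : ℕ, (∀ x : ℝ, ∑ l ∈ range N, c l * dff lam x l = 0) → ∀ l < N, c l = 0 := by
  intro N
  induction N with
  | zero => intro _ l hl; omega
  | succ M ih =>
    intro hsum
    set p : ℕ → Polynomial ℝ := fun l => ∏ i ∈ range l, (Polynomial.X - Polynomial.C ((i : ℝ) * lam)) with hp
    have hmonic : ∀ l, (p l).Monic := fun l =>
      Polynomial.monic_prod_of_monic _ _ fun i _ => Polynomial.monic_X_sub_C _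
    have hdeg : ∀ l, (p l).natDegree = l := by
      intro l
      rw [hp]
      rw [Polynomial.natDegree_prod _ _ fun i _ => (Polynomial.monic_X_sub_C _).ne_zero,
        Finset.sum_congr rfl fun i _ => Polynomial.natDegree_X_sub_C _,
        Finset.sum_const, Finset.card_range, smul_eq_mul, mul_one]
    have hQ : (∑ l ∈ range (M+1), Polynomial.C (c l) * p l) = 0 := by
      refine Polynomial.zero_of_eval_zero _ fun x => ?_
      rw [Polynomial.eval_finset_sum]
      rw [Finset.sum_congr rfl fun l _ => by rw [Polynomial.eval_mul, Polynomial.eval_C, dff_eval]]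
      exact hsum x
    have hcM : c M = 0 := by
      have := congrArg (Polynomial.coeff · M) hQ
      simp only [Polynomial.finset_sum_coeff, Polynomial.coeff_zero] at this
      rw [Finset.sum_range_succ] at this
      have hlast : (Polynomial.C (c M) * p M).coeff M = c M := by
        have hone : (p M).coeff M = 1 := by
          have h := (hmonic M).coeff_natDegree
          rwa [hdeg M] at h
        rw [Polynomial.coeff_C_mul, hone, mul_one]
      have hrest : ∀ l ∈ range M, (Polynomial.C (c l) * p l).coeff M = 0 := by
        intro l hl
        rw [Polynomial.coeff_C_mul, Polynomial.coeff_eq_zero_of_natDegree_lt, mul_zero]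
        rw [hdeg l]; simp only [mem_range] at hl; omega
      rw [Finset.sum_congr rfl hrest, Finset.sum_const, smul_zero, hlast, zero_add] at this
      exact this
    have hsum' : ∀ x : ℝ, ∑ l ∈ range M, c l * dff lam x l = 0 := by
      intro x
      have := hsum x
      rw [Finset.sum_range_succ, hcM, zero_mul, add_zero] at this
      exact this
    intro l hl
    rcases Nat.lt_succ_iff_lt_or_eq.mp hl with h | h
    · exact ih hsum' l h
    · rw [h]; exact hcM

/-- `Σ_{k=0}^n C_k^{(r)}(x) S_{1,λ}(n,k) = Σ_{k=0}^n E_{k,λ}^{(r)}(x) S_{J,λ}^{(1)}(n,k)`. -/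
theorem stmt_8 (lam : ℝ) (hlam : lam ≠ 0) (r : ℕ) (hr : 1 ≤ r)
    (S1 : ℕ → ℕ → ℝ)
    (hS1 : ∀ (x : ℝ) (n : ℕ), dff 1 x n = ∑ l ∈ Finset.range (n + 1), S1 n l * dff lam x l)
    (E C : ℝ → ℕ → ℝ)
    (hE : ∀ x : ℝ, (degExp lam 1 + degExp lam (-1)) ^ r *
      PowerSeries.mk (fun n => E x n / n.factorial) = 2 ^ r * degExp lam x)
    (hC : ∀ x : ℝ, (onePlus 2 + 1) ^ r *
      PowerSeries.mk (fun n => C x n / n.factorial) = 2 ^ r * onePlus (x + r))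
    (SJ1 : ℕ → ℕ → ℝ)
    (hSJ1 : ∀ k : ℕ, PowerSeries.mk (fun n => SJ1 n k / n.factorial) =
      ((k.factorial : ℝ))⁻¹ • pcomp (degLog lam) (degLog lam) ^ k)
    (n : ℕ) (x : ℝ) :
    ∑ k ∈ Finset.range (n + 1), C x k * S1 n k =
      ∑ k ∈ Finset.range (n + 1), E x k * SJ1 n k := by
  have hL0 : constantCoeff (degLog lam) = 0 := constantCoeff_degLog lam
  set L : ℝ⟦X⟧ := degLog lam with hLdef
  set g : ℝ⟦X⟧ := pcomp L L with hgdef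
  have hg0 : constantCoeff g = 0 := by
    rw [hgdef, constantCoeff_pcomp hL0, hL0]
  set W : ℝ → ℝ⟦X⟧ := fun y => pcomp (onePlus y) L with hWdef
  have hWmul : ∀ y z : ℝ, W y * W z = W (y + z) := by
    intro y z
    rw [hWdef]
    simp only
    rw [← pcomp_mul hL0, onePlus_mul]
  have hW0 : W 0 = 1 := by
    rw [hWdef]; simp only; rw [onePlus_zero, pcomp_one]
  have hWc : ∀ y : ℝ, constantCoeff (W y) = 1 := by
    intro y
    rw [hWdef]; simp only; rw [constantCoeff_pcomp hL0, constantCoeff_onePlus]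
  have hI : ∀ y : ℝ, pcomp (degExp lam y) g = W y := by
    intro y
    rw [hgdef, pcomp_assoc hL0 hL0, pcomp_degExp_degLog hlam]
  have hnfac : ((n.factorial : ℝ)) ≠ 0 := Nat.cast_ne_zero.mpr (Nat.factorial_ne_zero n)
  -- identification of S1
  have hexp : ∀ x' : ℝ, dff 1 x' n = ∑ l ∈ Finset.range (n + 1),
      ((n.factorial : ℝ) * coeff n (L ^ l) / l.factorial) * dff lam x' l := by
    intro x'
    have h := congrArg (coeff n) (pcomp_degExp_degLog hlam (lam := lam) x')
    rw [coeff_pcomp, coeff_onePlus] at h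
    simp only [degExp, coeff_mk] at h
    calc dff 1 x' n = (n.factorial : ℝ) * (dff 1 x' n / n.factorial) := by field_simp
      _ = (n.factorial : ℝ) * ∑ k ∈ Finset.range (n + 1),
            dff lam x' k / k.factorial * coeff n (L ^ k) := by rw [h]
      _ = _ := by
          rw [Finset.mul_sum]
          exact Finset.sum_congr rfl fun l _ => by ring
  have hS1' : ∀ k < n + 1, S1 n k = (n.factorial : ℝ) * coeff n (L ^ k) / k.factorial := by
    have hzero : ∀ x' : ℝ, ∑ l ∈ Finset.range (n + 1),
        (S1 n l - (n.factorial : ℝ) * coeff n (L ^ l) / l.factorial) * dff lam x' l = 0 := by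
      intro x'
      have h1 := hS1 x' n
      have h2 := hexp x'
      rw [Finset.sum_congr rfl fun l _ => sub_mul (S1 n l) _ (dff lam x' l),
        Finset.sum_sub_distrib, ← h1, ← h2, sub_self]
    intro k hk
    have := lin_indep_dff lam _ (n + 1) hzero k hk
    linarith [this]
  -- identification of SJ1
  have hSJ' : ∀ k : ℕ, SJ1 n k = (n.factorial : ℝ) * coeff n (g ^ k) / k.factorial := by
    intro k
    have h := congrArg (coeff n) (hSJ1 k)
    rw [coeff_mk, map_smul, smul_eq_mul] at h
    rw [hgdef, hLdef]
    have hkfac : ((k.factorial : ℝ)) ≠ 0 := Nat.cast_ne_zero.mpr (Nat.factorial_ne_zero k)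
    field_simp at h ⊢
    rw [h]
  -- express the two sides as coefficients of composed series
  set FC : ℝ⟦X⟧ := PowerSeries.mk fun k => C x k / k.factorial with hFC
  set FE : ℝ⟦X⟧ := PowerSeries.mk fun k => E x k / k.factorial with hFE
  have hLHS : ∑ k ∈ Finset.range (n + 1), C x k * S1 n k =
      (n.factorial : ℝ) * coeff n (pcomp FC L) := by
    rw [coeff_pcomp, Finset.mul_sum]
    refine Finset.sum_congr rfl fun k hk => ?_
    rw [hS1' k (Finset.mem_range.mp hk), hFC, coeff_mk]
    have hkfac : ((k.factorial : ℝ)) ≠ 0 := Nat.cast_ne_zero.mpr (Nat.factorial_ne_zero k)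
    field_simp
  have hRHS : ∑ k ∈ Finset.range (n + 1), E x k * SJ1 n k =
      (n.factorial : ℝ) * coeff n (pcomp FE g) := by
    rw [coeff_pcomp, Finset.mul_sum]
    refine Finset.sum_congr rfl fun k hk => ?_
    rw [hSJ' k, hFE, coeff_mk]
    have hkfac : ((k.factorial : ℝ)) ≠ 0 := Nat.cast_ne_zero.mpr (Nat.factorial_ne_zero k)
    field_simp
  -- pcomp of the defining equations
  have htwo : pcomp (2 : ℝ⟦X⟧) L = 2 := by
    rw [show (2 : ℝ⟦X⟧) = 1 + 1 from (one_add_one_eq_two).symm, pcomp_add, pcomp_one]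
  have htwog : pcomp (2 : ℝ⟦X⟧) g = 2 := by
    rw [show (2 : ℝ⟦X⟧) = 1 + 1 from (one_add_one_eq_two).symm, pcomp_add, pcomp_one]
  have eqC : (W 2 + 1) ^ r * pcomp FC L = 2 ^ r * W (x + r) := by
    have h := congrArg (fun f => pcomp f L) (hC x)
    rw [pcomp_mul hL0, pcomp_mul hL0, pcomp_pow hL0, pcomp_pow hL0, pcomp_add, pcomp_one,
      htwo] at h

    exact h
  have eqE : (W 1 + W (-1)) ^ r * pcomp FE g = 2 ^ r * W x := by
    have h := congrArg (fun f => pcomp f g) (hE x)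
    rw [pcomp_mul hg0, pcomp_mul hg0, pcomp_pow hg0, pcomp_pow hg0, pcomp_add,
      htwog, hI 1, hI (-1), hI x] at h
    exact h
  have hWpow : ∀ m : ℕ, W x * (W 1) ^ m = W (x + m) := by
    intro m
    induction m with
    | zero => rw [pow_zero, mul_one, Nat.cast_zero, add_zero]
    | succ j ih =>
      rw [pow_succ, ← mul_assoc, ih, hWmul]
      push_cast
      ring_nf
  have key : (W 2 + 1) ^ r * pcomp FE g = (W 2 + 1) ^ r * pcomp FC L := by
    have h1 : ((W 1 + W (-1)) * W 1) ^ r * pcomp FE g = 2 ^ r * (W x * (W 1) ^ r) := by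
      rw [mul_pow]
      calc (W 1 + W (-1)) ^ r * (W 1) ^ r * pcomp FE g
          = ((W 1 + W (-1)) ^ r * pcomp FE g) * (W 1) ^ r := by ring
        _ = (2 ^ r * W x) * (W 1) ^ r := by rw [eqE]
        _ = 2 ^ r * (W x * (W 1) ^ r) := by ring
    have h2 : (W 1 + W (-1)) * W 1 = W 2 + 1 := by
      rw [add_mul, hWmul, hWmul]
      norm_num
      rw [hW0]
    rw [h2, hWpow r] at h1
    rw [h1, eqC]
  have hWne : (W 2 + 1) ≠ 0 := by
    intro h
    have := congrArg (constantCoeff) h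
    rw [map_add, hWc 2, map_one, map_zero] at this
    norm_num at this
  have hPC : pcomp FE g = pcomp FC L :=
    mul_left_cancel₀ (pow_ne_zero r hWne) key
  rw [hLHS, hRHS, hPC]
end
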